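/- arXiv:2404.06383 — 5 statements merged into one kernel-verified Lean document; each statement's English description precedes it below -/
import Mathlib

section
/- Let A be a binomial random variable with parameters n and a, and B a binomial random variable with parameters n and b (not necessarily independent of A). If 0 < b ≤ a ≤ 1, then P[A ≤ B] ≤ 2·exp(−(a−b)²·n/(8a)). -/
/-!
Split at the midpoint `c = (a + b) n / 2` of the two means: `A ≤ B` forces `A ≤ c` or `c ≤ B`,
so only the two marginal tails matter and no joint law is needed. Each tail is a Chernoff bound
`P[s c ≤ s X] ≤ e^{-s c} (p e^s + 1 - p)^n`, obtained by summing over the level sets `{X = k}`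
(countable subadditivity only, so `X` need not be measurable). With `s = ∓(a - b)/(2a)`, the
bounds `1 + y ≤ e^y` and second/third-order Taylor bounds on `exp` bring both tails below
`exp(-(a - b)² n / (8a))`.
-/

open MeasureTheory Real

open scoped ENNReal

namespace Real

lemma exp_neg_le_one_sub_add_sq_div_two {x : ℝ} (hx : 0 ≤ x) :
    exp (-x) ≤ 1 - x + x ^ 2 / 2 := by
  have hq := quadratic_le_exp_of_nonneg hx
  -- `(1 + x + x²/2) (1 - x + x²/2) = 1 + x⁴/4 ≥ 1`
  rw [exp_neg, inv_le_iff_one_le_mul₀' (exp_pos x)]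
  nlinarith [sq_nonneg (x ^ 2), sq_nonneg x]

lemma exp_le_cubic_of_nonneg_of_le_one {x : ℝ} (h0 : 0 ≤ x) (h1 : x ≤ 1) :
    exp x ≤ 1 + x + x ^ 2 / 2 + 2 / 9 * x ^ 3 := by
  have h := exp_bound' h0 h1 (n := 3) (by norm_num)
  simp only [Finset.sum_range_succ, Finset.sum_range_zero, Nat.factorial] at h
  norm_num at h
  linarith

lemma mul_add_one_sub_pow_le_exp {p x : ℝ} (hp0 : 0 ≤ p) (hp1 : p ≤ 1) (hx : 0 ≤ x) (n : ℕ) :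
    (p * x + (1 - p)) ^ n ≤ exp (n * (p * (x - 1))) := by
  rw [exp_nat_mul]
  gcongr
  linarith [add_one_le_exp (p * (x - 1))]

end Real

theorem MeasureTheory.measure_preimage_le_tsum_mul {Ω : Type*} [MeasurableSpace Ω]
    (μ : Measure Ω) (X : Ω → ℕ) {s : Set ℕ} {w : ℕ → ℝ≥0∞} (hw : ∀ k ∈ s, 1 ≤ w k) :
    μ (X ⁻¹' s) ≤ ∑' k, μ {ω | X ω = k} * w k :=
  calc μ (X ⁻¹' s) ≤ ∑' k, μ (X ⁻¹' s ∩ {ω | X ω = k}) := by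
        refine (measure_mono fun ω hω => ?_).trans (measure_iUnion_le _)
        exact Set.mem_iUnion.2 ⟨X ω, hω, rfl⟩
    _ ≤ ∑' k, μ {ω | X ω = k} * w k := ENNReal.tsum_le_tsum fun k => by
        by_cases hk : k ∈ s
        · exact (measure_mono Set.inter_subset_right).trans (le_mul_of_one_le_right' (hw k hk))
        · have : X ⁻¹' s ∩ {ω | X ω = k} = ∅ :=
            Set.eq_empty_of_forall_notMem fun ω ⟨hω, hωk⟩ => hk (hωk ▸ hω)
          simp [this]

theorem MeasureTheory.measure_mul_le_mul_le_of_binomial {Ω : Type*} [MeasurableSpace Ω]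
    (μ : Measure Ω) [IsFiniteMeasure μ] {n : ℕ} {p : ℝ} (hp0 : 0 ≤ p) (hp1 : p ≤ 1)
    {X : Ω → ℕ}
    (hX : ∀ k : ℕ, (μ {ω | X ω = k}).toReal = (n.choose k : ℝ) * p ^ k * (1 - p) ^ (n - k))
    (s c : ℝ) :
    μ {ω | s * c ≤ s * X ω} ≤ ENNReal.ofReal (exp (-(s * c)) * (p * exp s + (1 - p)) ^ n) := by
  set q : ℕ → ℝ := fun k => (n.choose k : ℝ) * p ^ k * (1 - p) ^ (n - k) * exp (s * (k - c))
  have hq0 : ∀ k, 0 ≤ q k := fun k => by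
    have : 0 ≤ 1 - p := by linarith
    positivity
  have hweight : ∀ k ∈ {k : ℕ | s * c ≤ s * k}, 1 ≤ ENNReal.ofReal (exp (s * (k - c))) :=
    fun k hk => ENNReal.one_le_ofReal.2 (one_le_exp (by rw [mul_sub]; exact sub_nonneg.2 hk))
  have hterm : ∀ k, μ {ω | X ω = k} * ENNReal.ofReal (exp (s * (k - c))) = ENNReal.ofReal (q k) :=
    fun k => by
      rw [← ENNReal.ofReal_toReal (measure_ne_top μ _), hX, ← ENNReal.ofReal_mul (by positivity)]
  have hq_support : ∀ k ∉ Finset.range (n + 1), ENNReal.ofReal (q k) = 0 := fun k hk => by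
    simp [q, Nat.choose_eq_zero_of_lt (by simpa using hk : n < k)]
  calc μ {ω | s * c ≤ s * X ω}
      ≤ ∑' k, μ {ω | X ω = k} * ENNReal.ofReal (exp (s * (k - c))) :=
        measure_preimage_le_tsum_mul μ X hweight
    _ = ∑ k ∈ Finset.range (n + 1), ENNReal.ofReal (q k) := by
        rw [tsum_congr hterm, tsum_eq_sum hq_support]
    _ = ENNReal.ofReal (exp (-(s * c)) * (p * exp s + (1 - p)) ^ n) := by
        rw [← ENNReal.ofReal_sum_of_nonneg fun k _ => hq0 k, add_pow, Finset.mul_sum]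
        congr 1
        refine Finset.sum_congr rfl fun k _ => ?_
        have : exp (s * (k - c)) = exp (-(s * c)) * exp s ^ k := by
          rw [← exp_nat_mul, ← exp_add]
          ring_nf
        simp only [q, this, mul_pow]
        ring

lemma exp_mul_binomial_mgf_lower_le {n : ℕ} {a b : ℝ} (ha0 : 0 < a) (hba : b ≤ a) (ha1 : a ≤ 1) :
    exp ((a - b) / (2 * a) * ((a + b) / 2 * n)) * (a * exp (-((a - b) / (2 * a))) + (1 - a)) ^ n
      ≤ exp (-((a - b) ^ 2 * n) / (8 * a)) := by
  set t := (a - b) / (2 * a) with ht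
  have ht0 : 0 ≤ t := div_nonneg (by linarith) (by linarith)
  calc exp (t * ((a + b) / 2 * n)) * (a * exp (-t) + (1 - a)) ^ n
      ≤ exp (t * ((a + b) / 2 * n)) * exp (n * (a * (exp (-t) - 1))) := by
        gcongr
        exact mul_add_one_sub_pow_le_exp ha0.le ha1 (exp_pos _).le n
    _ = exp (n * (t * (a + b) / 2 + a * (exp (-t) - 1))) := by
        rw [← exp_add]
        ring_nf
    _ ≤ exp (n * (t * (a + b) / 2 + a * (-t + t ^ 2 / 2))) := by
        gcongr
        linarith [exp_neg_le_one_sub_add_sq_div_two ht0]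
    _ = exp (-((a - b) ^ 2 * n) / (8 * a)) := by
        congr 1
        rw [ht]
        field_simp
        ring

lemma exp_mul_binomial_mgf_upper_le {n : ℕ} {a b : ℝ} (hb0 : 0 < b) (hba : b ≤ a) (hb1 : b ≤ 1) :
    exp (-((a - b) / (2 * a) * ((a + b) / 2 * n))) * (b * exp ((a - b) / (2 * a)) + (1 - b)) ^ n
      ≤ exp (-((a - b) ^ 2 * n) / (8 * a)) := by
  have ha0 : 0 < a := hb0.trans_le hba
  set t := (a - b) / (2 * a) with ht
  have ht0 : 0 ≤ t := div_nonneg (by linarith) (by linarith)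
  have ht1 : t ≤ 1 := by
    rw [ht, div_le_one (by linarith)]
    linarith
  calc exp (-(t * ((a + b) / 2 * n))) * (b * exp t + (1 - b)) ^ n
      ≤ exp (-(t * ((a + b) / 2 * n))) * exp (n * (b * (exp t - 1))) := by
        gcongr
        exact mul_add_one_sub_pow_le_exp hb0.le hb1 (exp_pos _).le n
    _ = exp (n * (-(t * (a + b) / 2) + b * (exp t - 1))) := by
        rw [← exp_add]
        ring_nf
    _ ≤ exp (n * (-(t * (a + b) / 2) + b * (t + t ^ 2 / 2 + 2 / 9 * t ^ 3))) := by
        gcongr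
        linarith [exp_le_cubic_of_nonneg_of_le_one ht0 ht1]
    _ = exp (-((a - b) ^ 2 * n) / (8 * a)
          - n * ((a - b) ^ 3 * (9 * a - 2 * b) / (72 * a ^ 3))) := by
        congr 1
        rw [ht]
        field_simp
        ring
    _ ≤ exp (-((a - b) ^ 2 * n) / (8 * a)) := by
        gcongr
        have : 0 ≤ a - b := by linarith
        have : 0 ≤ 9 * a - 2 * b := by linarith
        simp only [sub_le_self_iff]
        positivity

/-- Lemma 10 (wrong order via Chernoff): if `A ~ Bin(n,a)` and `B ~ Bin(n,b)` (not
necessarily independent) with `0 < b ≤ a ≤ 1`, then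
`P[A ≤ B] ≤ 2 exp(-(a-b)² n / (8a))`. -/
theorem stmt_0 {Ω : Type*} [MeasurableSpace Ω] (ℙ : Measure Ω) [IsProbabilityMeasure ℙ]
    (n : ℕ) (a b : ℝ) (hb0 : 0 < b) (hba : b ≤ a) (ha1 : a ≤ 1)
    (A B : Ω → ℕ)
    (hA : ∀ k : ℕ, (ℙ {ω | A ω = k}).toReal = (n.choose k : ℝ) * a ^ k * (1 - a) ^ (n - k))
    (hB : ∀ k : ℕ, (ℙ {ω | B ω = k}).toReal = (n.choose k : ℝ) * b ^ k * (1 - b) ^ (n - k)) :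
    (ℙ {ω | A ω ≤ B ω}).toReal ≤ 2 * Real.exp (-((a - b) ^ 2 * n) / (8 * a)) := by
  have ha0 : 0 < a := hb0.trans_le hba
  set t := (a - b) / (2 * a)
  set c := (a + b) / 2 * n
  have ht0 : 0 ≤ t := div_nonneg (by linarith) (by linarith)
  have hsplit : {ω | A ω ≤ B ω} ⊆ {ω | -t * c ≤ -t * A ω} ∪ {ω | t * c ≤ t * B ω} := by
    intro ω hω
    rcases le_total (A ω : ℝ) c with h | h
    · exact Or.inl (mul_le_mul_of_nonpos_left h (neg_nonpos.2 ht0))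
    · exact Or.inr (mul_le_mul_of_nonneg_left (h.trans (by exact_mod_cast hω)) ht0)
  have hA_tail := measure_mul_le_mul_le_of_binomial ℙ ha0.le ha1 hA (-t) c
  have hB_tail := measure_mul_le_mul_le_of_binomial ℙ hb0.le (hba.trans ha1) hB t c
  refine ENNReal.toReal_le_of_le_ofReal (by positivity) ?_
  calc ℙ {ω | A ω ≤ B ω} ≤ ℙ {ω | -t * c ≤ -t * A ω} + ℙ {ω | t * c ≤ t * B ω} :=
        (measure_mono hsplit).trans (measure_union_le _ _)
    _ ≤ ENNReal.ofReal (exp (-((a - b) ^ 2 * n) / (8 * a))) +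
        ENNReal.ofReal (exp (-((a - b) ^ 2 * n) / (8 * a))) := by
        gcongr
        · refine hA_tail.trans (ENNReal.ofReal_le_ofReal ?_)
          simpa only [neg_mul, neg_neg] using exp_mul_binomial_mgf_lower_le ha0 hba ha1
        · exact hB_tail.trans
            (ENNReal.ofReal_le_ofReal (exp_mul_binomial_mgf_upper_le hb0 hba (hba.trans ha1)))
    _ = ENNReal.ofReal (2 * exp (-((a - b) ^ 2 * n) / (8 * a))) := by
        rw [← ENNReal.ofReal_add (by positivity) (by positivity), two_mul]
end

section
/- Fix α > 0 and let V_α(r) = (1/π)·∫₀¹ arccos(max(−1, (cosh(r) − x^{−1/α})/sinh(r))) dx for r > 0, with V_α(0) = 1. Then V_α is a strictly decreasing continuous bijection from [0,∞) to (0,1]. -/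
open Real Set

/-- The limiting volume function `V_α` in the critical analysis:
`V_α(r) = (1/π) ∫₀¹ arccos(max(−1, (cosh r − x^{−1/α})/sinh r)) dx` for `r > 0`,
and `V_α(0) = 1`. -/
noncomputable def Vfun (α : ℝ) (r : ℝ) : ℝ :=
  if r = 0 then 1
  else (1 / π) * ∫ x in (0:ℝ)..1,
    Real.arccos (max (-1) ((Real.cosh r - x ^ (-(1 / α))) / Real.sinh r))

/-!
Write `t = x ^ (-1/α)`, so `t ≥ 1` on `(0, 1]`; since `arccos` is already `π` below `-1`,
the integrand is `arccos ((cosh r - t) / sinh r)`. For fixed `t ≥ 1` the ratio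
`(cosh r - t) / sinh r` is `< 1`, strictly increasing in `r > 0`, exceeds `-1` exactly when
`r > log t`, and tends to `1`. Hence the integrand decreases in `r`, strictly on the set
`x > exp (-α r)` of positive measure, and tends to `0`; for `t > 1` it is constantly `π`
near `r = 0`, which gives continuity there. Dominated convergence yields continuity of `V_α`
and `V_α(r) → 0`, and the intermediate value theorem gives surjectivity onto `(0, 1]`.
-/

open Filter MeasureTheory Topology intervalIntegral

lemma arccos_max_neg_one (y : ℝ) : arccos (max (-1) y) = arccos y := by
  rcases le_total y (-1) with h | h
  · rw [max_eq_left h, arccos_neg_one, arccos_of_le_neg_one h]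
  · rw [max_eq_right h]

theorem StrictAntiOn.bijOn_Ici_of_tendsto {α β : Type*} [ConditionallyCompleteLinearOrder α]
    [DenselyOrdered α] [NoMaxOrder α] [TopologicalSpace α] [OrderTopology α]
    [LinearOrder β] [TopologicalSpace β] [OrderTopology β]
    {f : α → β} {a : α} {b : β} (hf : StrictAntiOn f (Ici a)) (hc : ContinuousOn f (Ici a))
    (hlim : Tendsto f atTop (𝓝 b)) : BijOn f (Ici a) (Ioc b (f a)) := by
  have hge : ∀ x ∈ Ici a, b ≤ f x := fun x hx =>
    le_of_tendsto hlim <| (eventually_ge_atTop x).mono fun y hy =>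
      hf.antitoneOn hx (mem_Ici.2 ((mem_Ici.1 hx).trans hy)) hy
  refine ⟨fun x hx => ⟨?_, hf.antitoneOn self_mem_Ici hx hx⟩, hf.injOn, fun y hy => ?_⟩
  · obtain ⟨z, hz⟩ := exists_gt x
    have hzmem : z ∈ Ici a := mem_Ici.2 ((mem_Ici.1 hx).trans hz.le)
    exact (hge z hzmem).trans_lt (hf hx hzmem hz)
  · obtain ⟨R, hR, haR⟩ :=
      ((hlim.eventually (gt_mem_nhds hy.1)).and (eventually_ge_atTop a)).exists
    obtain ⟨r, hr, rfl⟩ :=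
      intermediate_value_Icc' haR (hc.mono Icc_subset_Ici_self) ⟨hR.le, hy.2⟩
    exact ⟨r, hr.1, rfl⟩

section CoshSubDivSinh

variable {r t : ℝ}

lemma cosh_sub_div_sinh_lt_one (hr : 0 < r) (ht : exp (-r) < t) :
    (cosh r - t) / sinh r < 1 := by
  rw [div_lt_one (sinh_pos_iff.2 hr)]
  linarith [cosh_sub_sinh r]

lemma neg_one_lt_cosh_sub_div_sinh_iff (hr : 0 < r) :
    -1 < (cosh r - t) / sinh r ↔ t < exp r := by
  rw [lt_div_iff₀ (sinh_pos_iff.2 hr), ← cosh_add_sinh]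
  constructor <;> intro h <;> linarith

lemma strictMonoOn_cosh_sub_div_sinh (ht : 1 ≤ t) :
    StrictMonoOn (fun r => (cosh r - t) / sinh r) (Ioi 0) := by
  intro r hr s hs hrs
  obtain ⟨d, hd, rfl⟩ : ∃ d, 0 < d ∧ s = r + d := ⟨s - r, by linarith, by ring⟩
  have hr' : 0 < sinh r := sinh_pos_iff.2 hr
  have hd' : 0 < sinh d := sinh_pos_iff.2 hd
  -- after cross-multiplying, the right side minus the left is `t * gap + (t - 1) * sinh d`
  have hgap : 0 < sinh r * (cosh d - 1) + sinh d * (cosh r - 1) := by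
    have := one_lt_cosh.2 hd.ne'
    have := one_lt_cosh.2 hr.ne'
    positivity
  dsimp only
  rw [div_lt_div_iff₀ hr' (sinh_pos_iff.2 hs), cosh_add, sinh_add]
  nlinarith [cosh_sq_sub_sinh_sq r, mul_le_mul_of_nonneg_right ht hgap.le,
    mul_nonneg (sub_nonneg.2 ht) hd'.le]

lemma tendsto_cosh_sub_div_sinh_atTop (t : ℝ) :
    Tendsto (fun r => (cosh r - t) / sinh r) atTop (𝓝 1) := by
  have hsinh : Tendsto sinh atTop atTop :=
    tendsto_atTop_mono' _ ((eventually_ge_atTop 0).mono fun r hr => self_le_sinh_iff.2 hr)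
      tendsto_id
  -- `(cosh r - t) / sinh r = 1 + (exp (-r) - t) / sinh r`
  have h := (tendsto_const_nhds (x := (1 : ℝ))).add
    ((tendsto_exp_neg_atTop_nhds_zero.sub_const t).div_atTop hsinh)
  rw [add_zero] at h
  refine h.congr' ?_
  filter_upwards [eventually_gt_atTop 0] with r hr
  field_simp [(sinh_pos_iff.2 hr).ne']
  linarith [cosh_sub_sinh r]

end CoshSubDivSinh

namespace Vfun

/-- The integrand of `Vfun` in the variable `t = x ^ (-1/α)`; the value `π` at `r = 0`
makes `Vfun_eq_integral` hold for every `r`. -/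
noncomputable def angle (r t : ℝ) : ℝ :=
  if r = 0 then π else arccos ((cosh r - t) / sinh r)

variable {r r₁ r₂ t : ℝ}

lemma angle_zero (t : ℝ) : angle 0 t = π := if_pos rfl

lemma angle_of_ne_zero (hr : r ≠ 0) (t : ℝ) : angle r t = arccos ((cosh r - t) / sinh r) :=
  if_neg hr

lemma angle_le_pi (r t : ℝ) : angle r t ≤ π := by
  unfold angle; split_ifs
  exacts [le_rfl, arccos_le_pi _]

lemma norm_angle_le (r t : ℝ) : ‖angle r t‖ ≤ π := by
  refine (Real.norm_of_nonneg ?_).trans_le (angle_le_pi r t)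
  unfold angle; split_ifs
  exacts [pi_pos.le, arccos_nonneg _]

lemma continuous_angle (r : ℝ) : Continuous (angle r) := by
  unfold angle; split_ifs <;> fun_prop

lemma angle_eq_pi (hr : 0 ≤ r) (ht : exp r ≤ t) : angle r t = π := by
  rcases hr.eq_or_lt with rfl | hr
  · exact angle_zero t
  · rw [angle_of_ne_zero hr.ne', arccos_eq_pi, ← not_lt, neg_one_lt_cosh_sub_div_sinh_iff hr]
    exact ht.not_gt

lemma angle_le_angle (ht : 1 ≤ t) (h₁ : 0 ≤ r₁) (h : r₁ ≤ r₂) : angle r₂ t ≤ angle r₁ t := by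
  rcases h₁.eq_or_lt with rfl | h₁
  · exact angle_zero t ▸ angle_le_pi r₂ t
  · rw [angle_of_ne_zero h₁.ne', angle_of_ne_zero (h₁.trans_le h).ne']
    exact arccos_le_arccos ((strictMonoOn_cosh_sub_div_sinh ht).monotoneOn h₁ (h₁.trans_le h) h)

lemma angle_lt_angle (ht : 1 ≤ t) (h₁ : 0 ≤ r₁) (h : r₁ < r₂) (h₂ : t < exp r₂) :
    angle r₂ t < angle r₁ t := by
  have hr₂ : 0 < r₂ := h₁.trans_lt h
  have hlow : -1 < (cosh r₂ - t) / sinh r₂ := (neg_one_lt_cosh_sub_div_sinh_iff hr₂).2 h₂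
  have hup : (cosh r₂ - t) / sinh r₂ < 1 :=
    cosh_sub_div_sinh_lt_one hr₂ ((exp_lt_one_iff.2 (neg_lt_zero.2 hr₂)).trans_le ht)
  rw [angle_of_ne_zero hr₂.ne']
  rcases h₁.eq_or_lt with rfl | h₁
  · exact angle_zero t ▸ arccos_lt_pi.2 hlow
  · rw [angle_of_ne_zero h₁.ne', ← arccos_max_neg_one ((cosh r₁ - t) / sinh r₁)]
    exact arccos_lt_arccos (le_max_left _ _)
      (max_lt hlow (strictMonoOn_cosh_sub_div_sinh ht h₁ hr₂ h)) hup.le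

lemma continuousWithinAt_angle (ht : 1 < t) (hr : 0 ≤ r) :
    ContinuousWithinAt (angle · t) (Ici 0) r := by
  rcases hr.eq_or_lt with rfl | hr
  · refine continuousWithinAt_const.congr_of_eventuallyEq ?_ (angle_zero t)
    filter_upwards [Ico_mem_nhdsGE (log_pos ht)] with s hs
    exact angle_eq_pi hs.1 ((exp_lt_exp.2 hs.2).trans_eq (exp_log (by linarith))).le
  · have hcont : ContinuousAt (fun s => arccos ((cosh s - t) / sinh s)) r :=
      continuous_arccos.continuousAt.comp <| (continuous_cosh.sub continuous_const).continuousAt.div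
        continuous_sinh.continuousAt (sinh_pos_iff.2 hr).ne'
    refine (hcont.congr ?_).continuousWithinAt
    filter_upwards [eventually_gt_nhds hr] with s hs
    exact (angle_of_ne_zero hs.ne' t).symm

lemma tendsto_angle_atTop (t : ℝ) : Tendsto (angle · t) atTop (𝓝 0) := by
  have h := (continuous_arccos.tendsto 1).comp (tendsto_cosh_sub_div_sinh_atTop t)
  rw [arccos_one] at h
  refine h.congr' ?_
  filter_upwards [eventually_gt_atTop 0] with s hs
  exact (angle_of_ne_zero hs.ne' t).symm

lemma measurable_angle_rpow (r p : ℝ) : Measurable fun x : ℝ => angle r (x ^ p) :=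
  (continuous_angle r).measurable.comp (measurable_id.pow_const p)

lemma intervalIntegrable_angle_rpow (r p a b : ℝ) :
    IntervalIntegrable (fun x : ℝ => angle r (x ^ p)) volume a b :=
  intervalIntegrable_const.mono_fun' (measurable_angle_rpow r p).aestronglyMeasurable
    (ae_of_all _ fun _ => norm_angle_le r _)

end Vfun

open Vfun

lemma Vfun_zero (α : ℝ) : Vfun α 0 = 1 := if_pos rfl

lemma Vfun_eq_integral (α r : ℝ) :
    Vfun α r = (1 / π) * ∫ x in (0:ℝ)..1, angle r (x ^ (-(1 / α))) := by
  unfold Vfun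
  split_ifs with h
  · simp [h, angle_zero, pi_ne_zero]
  · simp only [angle_of_ne_zero h, arccos_max_neg_one]

lemma Vfun_strictAntiOn {α : ℝ} (hα : 0 < α) : StrictAntiOn (Vfun α) (Ici 0) := by
  intro r₁ h₁ r₂ h₂ h
  rw [Vfun_eq_integral, Vfun_eq_integral]
  refine mul_lt_mul_of_pos_left ?_ (by positivity)
  have hneg : -(1 / α) < 0 := neg_lt_zero.2 (by positivity)
  set c := exp (-(α * r₂))
  have hc : c < 1 := exp_lt_one_iff.2 (neg_lt_zero.2 (mul_pos hα (h₁.trans_lt h)))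
  have hc_rpow : c ^ (-(1 / α)) = exp r₂ := by
    rw [← exp_mul]; congr 1; field_simp
  refine integral_lt_integral_of_ae_le_of_measure_setOfPred_lt_ne_zero zero_le_one
    (intervalIntegrable_angle_rpow _ _ _ _) (intervalIntegrable_angle_rpow _ _ _ _) ?_ ?_
  · filter_upwards [ae_restrict_mem measurableSet_Ioc] with x hx
    exact angle_le_angle (one_le_rpow_of_pos_of_le_one_of_nonpos hx.1 hx.2 hneg.le) h₁ h.le
  · have hstrict : Ioc c 1 ⊆ {x | angle r₂ (x ^ (-(1 / α))) < angle r₁ (x ^ (-(1 / α)))} := by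
      intro x hx
      have hx0 : 0 < x := (exp_pos _).trans hx.1
      exact angle_lt_angle (one_le_rpow_of_pos_of_le_one_of_nonpos hx0 hx.2 hneg.le) h₁ h
        (hc_rpow ▸ rpow_lt_rpow_of_neg (exp_pos _) hx.1 hneg)
    have hsub : Ioc c 1 ⊆ _ ∩ Ioc 0 1 :=
      subset_inter hstrict (Ioc_subset_Ioc_left (exp_pos _).le)
    rw [Measure.restrict_apply' measurableSet_Ioc]
    exact ((show 0 < volume (Ioc c 1) by simpa using hc).trans_le (measure_mono hsub)).ne'

lemma Vfun_continuousOn {α : ℝ} (hα : 0 < α) : ContinuousOn (Vfun α) (Ici 0) := by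
  rw [show Vfun α = _ from funext (Vfun_eq_integral α)]
  intro r hr
  refine continuousWithinAt_const.mul <| continuousWithinAt_of_dominated_interval
    (bound := fun _ => π) (.of_forall fun s => (measurable_angle_rpow s _).aestronglyMeasurable)
    (.of_forall fun s => ae_of_all _ fun _ _ => norm_angle_le s _) intervalIntegrable_const ?_
  filter_upwards [volume.ae_ne 1] with x hx1 hx
  rw [uIoc_of_le zero_le_one] at hx
  exact continuousWithinAt_angle (one_lt_rpow_of_pos_of_lt_one_of_neg hx.1
    (hx.2.lt_of_ne hx1) (neg_lt_zero.2 (by positivity))) hr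

lemma tendsto_Vfun_atTop (α : ℝ) : Tendsto (Vfun α) atTop (𝓝 0) := by
  rw [show Vfun α = _ from funext (Vfun_eq_integral α)]
  simpa using (tendsto_integral_filter_of_dominated_convergence (fun _ => π)
    (.of_forall fun s => (measurable_angle_rpow s _).aestronglyMeasurable)
    (.of_forall fun s => ae_of_all _ fun _ _ => norm_angle_le s _) intervalIntegrable_const
    (ae_of_all _ fun _ _ => tendsto_angle_atTop _)).const_mul (1 / π)

/-- `V_α` is a strictly decreasing continuous bijection from `[0,∞)` onto `(0,1]`. -/
theorem stmt_7 (α : ℝ) (hα : 0 < α) :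
    StrictAntiOn (Vfun α) (Ici 0) ∧ ContinuousOn (Vfun α) (Ici 0) ∧
      BijOn (Vfun α) (Ici 0) (Ioc 0 1) := by
  have hanti := Vfun_strictAntiOn hα
  have hcont := Vfun_continuousOn hα
  refine ⟨hanti, hcont, ?_⟩
  simpa only [Vfun_zero] using hanti.bijOn_Ici_of_tendsto hcont (tendsto_Vfun_atTop α)
end

section
/- Fix α > 0 and r > 0, and for R > 0 define θ_r^R(y) = arccos(max(−1, (cosh(r)cosh(y) − cosh(R))/(sinh(r)sinh(y)))) for y ∈ (0,R). Let h_R(x) for x ∈ (0,1) be the unique positive solution of (cosh(α h) − 1)/(cosh(α R) − 1) = x. Then for every fixed x ∈ (0,1), as R → ∞, θ_r^R(h_R(x)) converges to arccos(max(−1, (cosh(r) − x^{−1/α})/sinh(r))). -/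
open Real Filter

/-- Inverse hyperbolic cosine: `arcosh x = log (x + √(x² - 1))`. -/
noncomputable def arcosh (x : ℝ) : ℝ := Real.log (x + Real.sqrt (x ^ 2 - 1))

/-- `h_R(x)`: the unique positive solution of `(cosh(αh) − 1)/(cosh(αR) − 1) = x`. -/
noncomputable def hRx (α R x : ℝ) : ℝ := _root_.arcosh (1 + x * (Real.cosh (α * R) - 1)) / α

/-- The half angular width of the ball `B((r,0),R)` at radius `y`. -/
noncomputable def thetaR (R r y : ℝ) : ℝ :=
  Real.arccos (max (-1)
    ((Real.cosh r * Real.cosh y - Real.cosh R) / (Real.sinh r * Real.sinh y)))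

/-!
On the scale `R → ∞` every hyperbolic function is `exp / 2` up to `o(1)` relative error, so
`arcosh u = log (2u) + o(1)` and `h_R(x) = R + log x / α + o(1)`. Writing `y = h_R(x)` and
`y - R → δ = log x / α`, the law-of-cosines ratio is
`(cosh r · coth y - cosh R / sinh y) / sinh r → (cosh r - e^{-δ}) / sinh r`,
and `e^{-δ} = x^{-1/α}`; continuity of `arccos ∘ max (-1)` finishes the proof.
-/

open Topology

lemma cosh_mul_exp_neg (t : ℝ) : cosh t * exp (-t) = (1 + exp (-(2 * t))) / 2 := by
  rw [cosh_eq, show -(2 * t) = -t + -t by ring, exp_add, exp_neg]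
  field_simp

lemma sinh_mul_exp_neg (t : ℝ) : sinh t * exp (-t) = (1 - exp (-(2 * t))) / 2 := by
  rw [sinh_eq, show -(2 * t) = -t + -t by ring, exp_add, exp_neg]
  field_simp

lemma tendsto_exp_neg_two_mul_atTop : Tendsto (fun t => exp (-(2 * t))) atTop (𝓝 0) :=
  tendsto_exp_neg_atTop_nhds_zero.comp (tendsto_id.const_mul_atTop two_pos)

lemma tendsto_cosh_mul_exp_neg_atTop : Tendsto (fun t => cosh t * exp (-t)) atTop (𝓝 (1 / 2)) := by
  simp_rw [cosh_mul_exp_neg]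
  simpa using (tendsto_exp_neg_two_mul_atTop.const_add 1).div_const 2

lemma tendsto_sinh_mul_exp_neg_atTop : Tendsto (fun t => sinh t * exp (-t)) atTop (𝓝 (1 / 2)) := by
  simp_rw [sinh_mul_exp_neg]
  simpa using (tendsto_exp_neg_two_mul_atTop.const_sub 1).div_const 2

lemma tendsto_cosh_div_sinh_of_tendsto_sub {ι : Type*} {l : Filter ι} {R y : ι → ℝ} {δ : ℝ}
    (hR : Tendsto R l atTop) (hyR : Tendsto (fun i => y i - R i) l (𝓝 δ)) :
    Tendsto (fun i => cosh (R i) / sinh (y i)) l (𝓝 (exp (-δ))) := by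
  have hy : Tendsto y l atTop := (hyR.add_atTop hR).congr fun i => by ring
  have hsplit : ∀ i, cosh (R i) / sinh (y i) =
      cosh (R i) * exp (-R i) / (sinh (y i) * exp (-y i)) * exp (-(y i - R i)) := by
    intro i
    rw [mul_div_mul_comm, mul_assoc, ← exp_sub, ← exp_add]
    ring_nf
    rw [exp_zero, mul_one]
  simp_rw [hsplit]
  have := ((tendsto_cosh_mul_exp_neg_atTop.comp hR).div (tendsto_sinh_mul_exp_neg_atTop.comp hy)
    (by norm_num)).mul ((continuous_exp.tendsto _).comp hyR.neg)
  simpa using this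

lemma arcosh_eq_log_add_log {u : ℝ} (hu : 0 < u) :
    _root_.arcosh u = log u + log (1 + sqrt (1 - u⁻¹ ^ 2)) := by
  have : sqrt (u ^ 2 - 1) = u * sqrt (1 - u⁻¹ ^ 2) := by
    rw [← sqrt_sq hu.le, ← sqrt_mul (sq_nonneg u), sqrt_sq hu.le]
    congr 1
    field_simp
  rw [_root_.arcosh, this, ← log_mul hu.ne' (by positivity)]
  ring_nf

lemma tendsto_arcosh_sub_log_atTop :
    Tendsto (fun u => _root_.arcosh u - log u) atTop (𝓝 (log 2)) := by
  have hsq : Tendsto (fun u : ℝ => 1 + sqrt (1 - u⁻¹ ^ 2)) atTop (𝓝 2) := by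
    have := ((tendsto_inv_atTop_zero.pow 2).const_sub 1).sqrt.const_add 1
    norm_num at this ⊢
    exact this
  refine ((continuousAt_log two_ne_zero).tendsto.comp hsq).congr' ?_
  filter_upwards [eventually_gt_atTop 0] with u hu
  simp [arcosh_eq_log_add_log hu]

lemma tendsto_cosh_mul_cosh_sub_cosh_div_sinh_mul_sinh {ι : Type*} {l : Filter ι} {R y : ι → ℝ} {δ : ℝ} (r : ℝ)
    (hR : Tendsto R l atTop) (hyR : Tendsto (fun i => y i - R i) l (𝓝 δ)) :
    Tendsto (fun i => (cosh r * cosh (y i) - cosh (R i)) / (sinh r * sinh (y i))) l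
      (𝓝 ((cosh r - exp (-δ)) / sinh r)) := by
  have hy : Tendsto y l atTop := (hyR.add_atTop hR).congr fun i => by ring
  have hcoth : Tendsto (fun i => cosh (y i) / sinh (y i)) l (𝓝 1) := by
    simpa using tendsto_cosh_div_sinh_of_tendsto_sub (δ := 0) hy (by simpa using tendsto_const_nhds)
  have := ((hcoth.const_mul (cosh r)).sub (tendsto_cosh_div_sinh_of_tendsto_sub hR hyR)).div_const
    (sinh r)
  rw [mul_one] at this
  refine this.congr fun i => ?_
  ring

lemma tendsto_one_add_mul_cosh_sub_one_mul_exp_neg (x : ℝ) :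
    Tendsto (fun t => (1 + x * (cosh t - 1)) * exp (-t)) atTop (𝓝 (x / 2)) := by
  have := (tendsto_exp_neg_atTop_nhds_zero.const_mul (1 - x)).add
    (tendsto_cosh_mul_exp_neg_atTop.const_mul x)
  rw [mul_zero, zero_add, mul_one_div] at this
  exact this.congr fun t => by ring

lemma tendsto_arcosh_one_add_mul_cosh_sub_one_sub {x : ℝ} (hx : 0 < x) :
    Tendsto (fun t => _root_.arcosh (1 + x * (cosh t - 1)) - t) atTop (𝓝 (log x)) := by
  have hu := tendsto_one_add_mul_cosh_sub_one_mul_exp_neg x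
  have hx2 : 0 < x / 2 := by positivity
  have huTop : Tendsto (fun t => 1 + x * (cosh t - 1)) atTop atTop :=
    (hu.pos_mul_atTop hx2 tendsto_exp_atTop).congr fun t => by
      rw [mul_assoc, ← exp_add, neg_add_cancel, exp_zero, mul_one]
  have := (tendsto_arcosh_sub_log_atTop.comp huTop).add
    ((continuousAt_log hx2.ne').tendsto.comp hu)
  rw [← log_mul two_ne_zero hx2.ne', mul_div_cancel₀ _ two_ne_zero] at this
  refine this.congr' ?_
  filter_upwards [huTop.eventually_gt_atTop 0] with t ht
  simp only [Function.comp_apply, log_mul ht.ne' (exp_pos _).ne', log_exp]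
  ring

lemma tendsto_hRx_sub {α x : ℝ} (hα : 0 < α) (hx : 0 < x) :
    Tendsto (fun R => hRx α R x - R) atTop (𝓝 (log x / α)) := by
  refine (((tendsto_arcosh_one_add_mul_cosh_sub_one_sub hx).comp
    (tendsto_id.const_mul_atTop hα)).div_const α).congr fun R => ?_
  simp only [Function.comp_apply, id_eq, hRx]
  field_simp

theorem stmt_10_general (α r x : ℝ) (hα : 0 < α) (hx : x ∈ Set.Ioo (0:ℝ) 1) :
    Tendsto (fun R : ℝ => thetaR R r (hRx α R x)) atTop
      (nhds (Real.arccos (max (-1)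
        ((Real.cosh r - x ^ (-(1 / α))) / Real.sinh r)))) := by
  have hpow : x ^ (-(1 / α)) = exp (-(log x / α)) := by
    rw [rpow_def_of_pos hx.1]
    ring_nf
  rw [hpow]
  exact (continuous_arccos.comp (continuous_const.max continuous_id)).continuousAt.tendsto.comp
    (tendsto_cosh_mul_cosh_sub_cosh_div_sinh_mul_sinh r tendsto_id (tendsto_hRx_sub hα hx.1))

/-- For fixed `α > 0`, `r > 0` and `x ∈ (0,1)`, as `R → ∞`,
`θ_r^R(h_R(x)) → arccos(max(−1, (cosh r − x^{−1/α})/sinh r))`. -/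
theorem stmt_10 (α r x : ℝ) (hα : 0 < α) (hr : 0 < r) (hx : x ∈ Set.Ioo (0:ℝ) 1) :
    Tendsto (fun R : ℝ => thetaR R r (hRx α R x)) atTop
      (nhds (Real.arccos (max (-1)
        ((Real.cosh r - x ^ (-(1 / α))) / Real.sinh r)))) :=
  stmt_10_general α r x hα hx
end

section
/- Fix α > 0, ν > 0 with α < 1/2 and set R_n = 2·log(n/ν). Let ρ_n(r) = α·sinh(α r)/(cosh(α R_n) − 1)·1_{r < R_n}. Then for every continuous non-negative function φ on [0,∞) with compact support, n·∫₀^∞ φ(n^{1/2−α}·r)·ρ_n(r) dr converges as n → ∞ to ∫₀^∞ φ(u)·2α²ν^{2α}·u du. -/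
/-!
Substituting `u = c r` with `c = n ^ (1/2 - α)` and using `n / c = c n ^ (2α)`, the integrand
becomes `φ u · α · c sinh (α u / c) · n ^ (2α) / (cosh (α R_n) - 1)` on `u / c < R_n`.
Since `exp (α R_n) = (n / ν) ^ (2α)`, the last factor tends to `2 ν ^ (2α)`, while
`c sinh (α u / c) → α u` as `c → ∞`. The bound `c sinh (a / c) ≤ a e ^ a` for `c ≥ 1` dominates
the integrands by `|φ u| · u e ^ (α u)` up to a constant, which is integrable because `φ` has
compact support, so dominated convergence applies.
-/

open Real Filter MeasureTheory

/-- Radius of the random hyperbolic graph: `R_n = 2 log(n/ν)`. -/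
noncomputable def Rn (ν : ℝ) (n : ℕ) : ℝ := 2 * Real.log (n / ν)

/-- Radial density of the random hyperbolic graph:
`ρ_n(r) = α sinh(αr)/(cosh(αR_n) − 1)` for `0 ≤ r < R_n` and `0` otherwise. -/
noncomputable def rhon (α ν : ℝ) (n : ℕ) (r : ℝ) : ℝ :=
  if r < Rn ν n then α * Real.sinh (α * r) / (Real.cosh (α * Rn ν n) - 1) else 0

open Set Topology

namespace Real

lemma cosh_sub_one_eq (y : ℝ) : cosh y - 1 = exp y * (1 - exp (-y)) ^ 2 / 2 := by
  rw [cosh_eq, exp_neg]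
  field_simp
  ring

lemma tendsto_exp_div_cosh_sub_one : Tendsto (fun y => exp y / (cosh y - 1)) atTop (𝓝 2) := by
  have h : Tendsto (fun y => 2 / (1 - exp (-y)) ^ 2) atTop (𝓝 (2 / (1 - 0) ^ 2)) :=
    tendsto_const_nhds.div ((tendsto_const_nhds.sub tendsto_exp_neg_atTop_nhds_zero).pow 2)
      (by norm_num)
  norm_num at h
  refine h.congr fun y => ?_
  rw [cosh_sub_one_eq, div_div_eq_mul_div, mul_div_mul_left _ _ (exp_pos y).ne']

lemma sinh_le_mul_exp (x : ℝ) : sinh x ≤ x * exp x := by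
  have h : 1 - 2 * x ≤ exp (-(2 * x)) := by linarith [add_one_le_exp (-(2 * x))]
  have : exp x * exp (-(2 * x)) = exp (-x) := by rw [← exp_add]; ring_nf
  rw [sinh_eq]
  nlinarith [exp_pos x]

lemma mul_sinh_div_le {a c : ℝ} (ha : 0 ≤ a) (hc : 1 ≤ c) : c * sinh (a / c) ≤ a * exp a := by
  have hc0 : 0 < c := by linarith
  have hac : a / c ≤ a := div_le_self ha hc
  calc c * sinh (a / c) ≤ c * (a / c * exp (a / c)) := by
        gcongr; exact sinh_le_mul_exp _
    _ = a * exp (a / c) := by field_simp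
    _ ≤ a * exp a := by gcongr

lemma tendsto_mul_sinh_div_atTop (a : ℝ) : Tendsto (fun c => c * sinh (a / c)) atTop (𝓝 a) := by
  have hderiv : HasDerivAt (fun t => sinh (a * t)) a 0 := by
    simpa using ((hasDerivAt_id 0).const_mul a).sinh
  refine ((hasDerivAt_iff_tendsto_slope_zero.1 hderiv).comp
    (tendsto_inv_atTop_nhdsGT_zero.mono_right (nhdsWithin_mono _ fun _ h => ne_of_gt h))).congr' ?_
  filter_upwards with c
  simp [div_eq_mul_inv]

end Real

lemma exp_mul_Rn (α : ℝ) {ν : ℝ} (hν : 0 < ν) {n : ℕ} (hn : n ≠ 0) :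
    exp (α * Rn ν n) = (n : ℝ) ^ (2 * α) / ν ^ (2 * α) := by
  have hn0 : (0 : ℝ) < n := by positivity
  rw [← div_rpow hn0.le hν.le, rpow_def_of_pos (by positivity), Rn]
  ring_nf

lemma tendsto_Rn_atTop {ν : ℝ} (hν : 0 < ν) : Tendsto (Rn ν) atTop atTop :=
  (tendsto_log_atTop.comp (tendsto_natCast_atTop_atTop.atTop_div_const hν)).const_mul_atTop
    two_pos

lemma tendsto_rpow_div_cosh_Rn {α ν : ℝ} (hα : 0 < α) (hν : 0 < ν) :
    Tendsto (fun n : ℕ => (n : ℝ) ^ (2 * α) / (cosh (α * Rn ν n) - 1)) atTop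
      (𝓝 (2 * ν ^ (2 * α))) := by
  have h := (tendsto_exp_div_cosh_sub_one.comp ((tendsto_Rn_atTop hν).const_mul_atTop hα)).const_mul
    (ν ^ (2 * α))
  rw [mul_comm 2 (ν ^ (2 * α))]
  refine h.congr' ?_
  filter_upwards [eventually_ne_atTop 0] with n hn
  have : 0 < ν ^ (2 * α) := by positivity
  simp only [Function.comp_apply, exp_mul_Rn α hν hn]
  field_simp

lemma measurable_rhon (α ν : ℝ) (n : ℕ) : Measurable (rhon α ν n) :=
  Measurable.ite measurableSet_Iio (by fun_prop) measurable_const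

lemma rhon_nonneg {α : ℝ} (hα : 0 ≤ α) (ν : ℝ) (n : ℕ) {r : ℝ} (hr : 0 ≤ r) :
    0 ≤ rhon α ν n r := by
  unfold rhon
  split_ifs
  · have := one_le_cosh (α * Rn ν n)
    have := sinh_nonneg_iff.2 (mul_nonneg hα hr)
    positivity
  · rfl

lemma div_rpow_half_sub {x : ℝ} (hx : 0 < x) (α : ℝ) :
    x / x ^ ((1 : ℝ) / 2 - α) = x ^ ((1 : ℝ) / 2 - α) * x ^ (2 * α) := by
  rw [div_eq_iff (rpow_pos_of_pos hx _).ne', ← rpow_add hx, ← rpow_add hx]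
  ring_nf
  exact (rpow_one x).symm

lemma one_le_natCast_rpow {n : ℕ} (hn : n ≠ 0) {z : ℝ} (hz : 0 ≤ z) : 1 ≤ (n : ℝ) ^ z :=
  one_le_rpow (Nat.one_le_cast.2 (Nat.one_le_iff_ne_zero.2 hn)) hz

/-- `n` times the density of the rescaled radius `n ^ (1/2 - α) * r` when `r` has density `ρ_n`. -/
noncomputable def rescaledIntensity (α ν : ℝ) (n : ℕ) (u : ℝ) : ℝ :=
  n / (n : ℝ) ^ ((1 : ℝ) / 2 - α) * rhon α ν n (u / (n : ℝ) ^ ((1 : ℝ) / 2 - α))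

section rescaledIntensity

variable {α ν : ℝ}

lemma rescaledIntensity_of_lt {n : ℕ} (hn : n ≠ 0) {u : ℝ}
    (h : u / (n : ℝ) ^ ((1 : ℝ) / 2 - α) < Rn ν n) :
    rescaledIntensity α ν n u = α * ((n : ℝ) ^ ((1 : ℝ) / 2 - α) *
      sinh (α * u / (n : ℝ) ^ ((1 : ℝ) / 2 - α))) *
        ((n : ℝ) ^ (2 * α) / (cosh (α * Rn ν n) - 1)) := by
  rw [rescaledIntensity, rhon, if_pos h, div_rpow_half_sub (by positivity), ← mul_div_assoc α u]
  ring

lemma rescaledIntensity_nonneg (hα : 0 ≤ α) (n : ℕ) {u : ℝ} (hu : 0 ≤ u) :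
    0 ≤ rescaledIntensity α ν n u :=
  mul_nonneg (by positivity) (rhon_nonneg hα ν n (by positivity))

lemma measurable_rescaledIntensity (n : ℕ) : Measurable (rescaledIntensity α ν n) :=
  ((measurable_rhon α ν n).comp (measurable_id.div_const _)).const_mul _

lemma tendsto_rescaledIntensity (hα : 0 < α) (hα2 : α < 1 / 2) (hν : 0 < ν) {u : ℝ}
    (hu : 0 ≤ u) :
    Tendsto (fun n => rescaledIntensity α ν n u) atTop (𝓝 (2 * α ^ 2 * ν ^ (2 * α) * u)) := by
  have hscale : Tendsto (fun n : ℕ => (n : ℝ) ^ ((1 : ℝ) / 2 - α)) atTop atTop :=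
    (tendsto_rpow_atTop (by linarith)).comp tendsto_natCast_atTop_atTop
  have h := ((tendsto_mul_sinh_div_atTop (α * u)).comp hscale).const_mul α |>.mul
    (tendsto_rpow_div_cosh_Rn hα hν)
  rw [show 2 * α ^ 2 * ν ^ (2 * α) * u = α * (α * u) * (2 * ν ^ (2 * α)) by ring]
  refine h.congr' ?_
  filter_upwards [eventually_ne_atTop 0, (tendsto_Rn_atTop hν).eventually_gt_atTop u]
    with n hn huR
  have hscale_one : 1 ≤ (n : ℝ) ^ ((1 : ℝ) / 2 - α) := one_le_natCast_rpow hn (by linarith)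
  rw [rescaledIntensity_of_lt hn ((div_le_self hu hscale_one).trans_lt huR)]
  rfl

lemma eventually_rescaledIntensity_le (hα : 0 < α) (hα2 : α < 1 / 2) (hν : 0 < ν) :
    ∀ᶠ n in atTop, ∀ u, 0 ≤ u →
      rescaledIntensity α ν n u ≤ 4 * α ^ 2 * ν ^ (2 * α) * u * exp (α * u) := by
  filter_upwards [eventually_ne_atTop 0, (tendsto_rpow_div_cosh_Rn hα hν).eventually_le_const
    (show 2 * ν ^ (2 * α) < 4 * ν ^ (2 * α) by linarith [rpow_pos_of_pos hν (2 * α)])]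
    with n hn hratio u hu
  by_cases hR : u / (n : ℝ) ^ ((1 : ℝ) / 2 - α) < Rn ν n
  · have hscale_one : 1 ≤ (n : ℝ) ^ ((1 : ℝ) / 2 - α) := one_le_natCast_rpow hn (by linarith)
    rw [rescaledIntensity_of_lt hn hR]
    calc _ ≤ α * (α * u * exp (α * u)) * (4 * ν ^ (2 * α)) := by
          have := one_le_cosh (α * Rn ν n)
          have := sinh_nonneg_iff.2 (show 0 ≤ α * u / (n : ℝ) ^ ((1 : ℝ) / 2 - α) by positivity)
          gcongr ?_ * ?_
          · exact mul_le_mul_of_nonneg_left (mul_sinh_div_le (by positivity) hscale_one) hα.le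
      _ = _ := by ring
  · rw [rescaledIntensity, rhon, if_neg hR, mul_zero]
    positivity

end rescaledIntensity

lemma natCast_mul_integral_rhon_eq (α ν : ℝ) {n : ℕ} (hn : n ≠ 0) (φ : ℝ → ℝ) :
    (n : ℝ) * ∫ r in Ioi (0 : ℝ), φ ((n : ℝ) ^ ((1 : ℝ) / 2 - α) * r) * rhon α ν n r =
      ∫ u in Ioi (0 : ℝ), φ u * rescaledIntensity α ν n u := by
  set c := (n : ℝ) ^ ((1 : ℝ) / 2 - α)
  have hc : 0 < c := by positivity
  have hsubst := integral_comp_mul_left_Ioi (fun u => φ u * rhon α ν n (u / c)) 0 hc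
  simp only [mul_div_cancel_left₀ _ hc.ne', mul_zero, smul_eq_mul] at hsubst
  simp only [rescaledIntensity, mul_left_comm (φ _), integral_const_mul, hsubst]
  ring

theorem stmt_12_general (α ν : ℝ) (hα : 0 < α) (hα2 : α < 1 / 2) (hν : 0 < ν)
    (φ : ℝ → ℝ) (hc : Continuous φ) (hsupp : HasCompactSupport φ) :
    Tendsto (fun n : ℕ =>
        (n : ℝ) * ∫ r in Set.Ioi (0:ℝ), φ ((n : ℝ) ^ ((1:ℝ)/2 - α) * r) * rhon α ν n r)
      atTop
      (nhds (∫ u in Set.Ioi (0:ℝ), φ u * (2 * α ^ 2 * ν ^ (2 * α) * u))) := by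
  have hchange := (eventually_ne_atTop 0).mono fun n hn =>
    (natCast_mul_integral_rhon_eq α ν hn φ).symm
  refine Tendsto.congr' hchange (tendsto_integral_filter_of_dominated_convergence
    (fun u => ‖φ u‖ * (4 * α ^ 2 * ν ^ (2 * α) * u * exp (α * u))) ?_ ?_ ?_ ?_)
  · exact .of_forall fun n =>
      (hc.measurable.mul (measurable_rescaledIntensity n)).aestronglyMeasurable
  · filter_upwards [eventually_rescaledIntensity_le hα hα2 hν] with n hle
    filter_upwards [self_mem_ae_restrict measurableSet_Ioi] with u (hu : 0 < u)
    rw [norm_mul, Real.norm_of_nonneg (rescaledIntensity_nonneg hα.le n hu.le)]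
    exact mul_le_mul_of_nonneg_left (hle u hu.le) (norm_nonneg _)
  · exact ((by fun_prop : Continuous _).integrable_of_hasCompactSupport
      hsupp.norm.mul_right).integrableOn
  · filter_upwards [self_mem_ae_restrict measurableSet_Ioi] with u (hu : 0 < u)
    exact (tendsto_rescaledIntensity hα hα2 hν hu.le).const_mul (φ u)

/-- Intensity convergence in the regime `α < 1/2`: for every `φ ∈ C_c⁺([0,∞))`,
`n ∫₀^∞ φ(n^{1/2−α} r) ρ_n(r) dr → ∫₀^∞ φ(u) · 2α²ν^{2α} u du`. -/
theorem stmt_12 (α ν : ℝ) (hα : 0 < α) (hα2 : α < 1 / 2) (hν : 0 < ν)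
    (φ : ℝ → ℝ) (hc : Continuous φ) (hsupp : HasCompactSupport φ) (hpos : 0 ≤ φ) :
    Tendsto (fun n : ℕ =>
        (n : ℝ) * ∫ r in Set.Ioi (0:ℝ), φ ((n : ℝ) ^ ((1:ℝ)/2 - α) * r) * rhon α ν n r)
      atTop
      (nhds (∫ u in Set.Ioi (0:ℝ), φ u * (2 * α ^ 2 * ν ^ (2 * α) * u))) :=
  stmt_12_general α ν hα hα2 hν φ hc hsupp
end

section
/- Fix α > 1/2 and R > 0. For r ∈ [0,R) and y ∈ [R − r, R), let θ_r(y) = arccos((cosh(r)cosh(y) − cosh(R))/(sinh(r)sinh(y))). Then there exist absolute constants C > 0 and c > 0 (independent of R, r, y) such that whenever R − r − y ≤ −c, we have |θ_r(y) − 2e^{(R−r−y)/2}| ≤ C·e^{3(R−r−y)/2}. -/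
open Real


private lemma aux_exp5 : (100:ℝ) ≤ Real.exp 5 := by
  have h1 : Real.exp ((5:ℕ) * (1:ℝ)) = Real.exp 1 ^ (5:ℕ) := Real.exp_nat_mul 1 5
  have h2 : (2.7182818283:ℝ) < Real.exp 1 := Real.exp_one_gt_d9
  have h3 : (2.7182818283:ℝ)^(5:ℕ) ≤ Real.exp 1 ^ (5:ℕ) :=
    pow_le_pow_left₀ (by norm_num) h2.le 5
  have h4 : Real.exp ((5:ℕ) * (1:ℝ)) = Real.exp 5 := by norm_num
  have h5 : (100:ℝ) ≤ (2.7182818283:ℝ)^(5:ℕ) := by norm_num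
  linarith

private lemma aux_exp10 : (5000:ℝ) ≤ Real.exp 10 := by
  have h1 : Real.exp ((10:ℕ) * (1:ℝ)) = Real.exp 1 ^ (10:ℕ) := Real.exp_nat_mul 1 10
  have h2 : (2.7182818283:ℝ) < Real.exp 1 := Real.exp_one_gt_d9
  have h3 : (2.7182818283:ℝ)^(10:ℕ) ≤ Real.exp 1 ^ (10:ℕ) :=
    pow_le_pow_left₀ (by norm_num) h2.le 10
  have h4 : Real.exp ((10:ℕ) * (1:ℝ)) = Real.exp 10 := by norm_num
  have h5 : (5000:ℝ) ≤ (2.7182818283:ℝ)^(10:ℕ) := by norm_num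
  linarith

private lemma aux_pos (a t : ℝ) (ha1 : 1 < a) (hat : 1 < a*t) : 0 < a^2*t - 1 := by
  nlinarith

private lemma aux_polyUp (E A : ℝ) (hE0 : 0 < E) (hE1 : E ≤ 1/100) (hA : A ≤ E^2 + 6*E^4)
    (hx4 : (2*E+100*E^3)^4 ≤ 81*E^4) :
    1 - (2*E+100*E^3)^2/2 + (2*E+100*E^3)^4 * (5/96) ≤ 1 - 2*A := by
  linarith [hA, hx4, (pow_pos hE0 6).le, (pow_pos hE0 4).le]

private lemma aux_polyLo (E A : ℝ) (hE0 : 0 < E) (hE1 : E ≤ 1/100) (hA : E^2 - 6*E^4 ≤ A)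
    (hy4 : (2*E-100*E^3)^4 ≤ 16*E^4) :
    1 - 2*A ≤ 1 - (2*E-100*E^3)^2/2 - (2*E-100*E^3)^4 * (5/96) := by
  have h2 : E^2 ≤ 1/10000 := by nlinarith
  have h6 : E^6 ≤ E^4/10000 := by
    have h3 : (0:ℝ) ≤ E^4*(1/10000 - E^2) := mul_nonneg (pow_pos hE0 4).le (by linarith)
    nlinarith [h3]
  linarith [hA, hy4, h6, (pow_pos hE0 4).le]

private lemma aux_small (E : ℝ) (hE0 : 0 < E) (hE1 : E ≤ 1/100) :
    100*E^3 ≤ E ∧ 2*E + 100*E^3 ≤ 1 := by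
  have h2 : E^2 ≤ 1/10000 := by nlinarith
  have h4 := mul_le_mul_of_nonneg_left h2 hE0.le
  have h3 : 100*E^3 ≤ E := by nlinarith [h4]
  exact ⟨h3, by linarith⟩

private lemma aux_Ale1 (E A : ℝ) (hE0 : 0 < E) (hE1 : E ≤ 1/100) (hA : A ≤ E^2 + 6*E^4) :
    A ≤ 1 := by
  have h2 : E^2 ≤ 1/10000 := by nlinarith
  have h4 : E^4 ≤ 1/100000000 := by nlinarith [sq_nonneg E, h2]
  linarith

set_option maxHeartbeats 2000000 in
/-- Quantitative form of the estimate `θ_r(y) = 2e^{(R−r−y)/2}(1 + O(e^{R−r−y}))`: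
there are absolute constants `C, c > 0` such that for all `R > 0`, `r ∈ [0,R)`,
`y ∈ [R−r, R)` with `R − r − y ≤ −c`,
`|arccos((cosh r cosh y − cosh R)/(sinh r sinh y)) − 2e^{(R−r−y)/2}| ≤ C e^{3(R−r−y)/2}`. -/
theorem stmt_19 :
    ∃ C > 0, ∃ c > 0, ∀ R r y : ℝ, 0 < R → r ∈ Set.Ico 0 R →
      y ∈ Set.Ico (R - r) R → R - r - y ≤ -c →
      |Real.arccos ((Real.cosh r * Real.cosh y - Real.cosh R) /
            (Real.sinh r * Real.sinh y))
          - 2 * Real.exp ((R - r - y) / 2)|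
        ≤ C * Real.exp (3 * (R - r - y) / 2) := by
  refine ⟨100, by norm_num, 10, by norm_num, ?_⟩
  intro R r y hR hr hy hu
  obtain ⟨hr0, hrR⟩ := hr
  obtain ⟨hy1, hyR⟩ := hy
  set u : ℝ := R - r - y with hudef
  have hru : -r < u := by simp only [hudef]; linarith
  have hu10 : u ≤ -10 := hu
  have hr10 : (10:ℝ) < r := by linarith
  have hypos : 0 < y := by linarith
  set a := Real.exp r with hadef
  set b := Real.exp y with hbdef
  set t := Real.exp u with htdef
  have ha0 : 0 < a := exp_pos r
  have hb0 : 0 < b := exp_pos y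
  have ht0 : 0 < t := exp_pos u
  have ha1 : 1 < a := by rw [hadef]; exact one_lt_exp_iff.mpr (by linarith)
  have hb1 : 1 < b := by rw [hbdef]; exact one_lt_exp_iff.mpr hypos
  have hat : 1 < a * t := by
    rw [hadef, htdef, ← Real.exp_add]
    exact one_lt_exp_iff.mpr (by linarith)
  have hbt : 1 < b * t := by
    rw [hbdef, htdef, ← Real.exp_add]
    exact one_lt_exp_iff.mpr (by linarith)
  have hexp10 : (5000:ℝ) ≤ Real.exp 10 := aux_exp10
  have ht1 : t ≤ 1/5000 := by
    have : t ≤ Real.exp (-10) := by rw [htdef]; exact Real.exp_le_exp.mpr hu10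
    rw [Real.exp_neg] at this
    have h2 := Real.exp_pos 10
    calc t ≤ (Real.exp 10)⁻¹ := this
    _ ≤ 1/5000 := by rw [inv_le_comm₀ h2 (by norm_num)] at *; linarith
  have hRe : Real.exp R = a * b * t := by
    rw [hadef, hbdef, htdef, ← Real.exp_add, ← Real.exp_add]
    congr 1
    simp only [hudef]; ring
  clear_value u a b t
  -- the identity X = 1 - 2A
  obtain ⟨A, hAdef⟩ : ∃ A : ℝ, A = ((a^2*t - 1)*(b^2*t - 1))/(t*(a^2-1)*(b^2-1)) := ⟨_, rfl⟩
  have hane : a ≠ 0 := ne_of_gt ha0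
  have hbne : b ≠ 0 := ne_of_gt hb0
  have htne : t ≠ 0 := ne_of_gt ht0
  have ha2 : a^2 - 1 ≠ 0 := by nlinarith
  have hb2 : b^2 - 1 ≠ 0 := by nlinarith
  have hsinh : Real.sinh r * Real.sinh y = (a - a⁻¹)*(b - b⁻¹)/4 := by
    rw [Real.sinh_eq, Real.sinh_eq, Real.exp_neg, Real.exp_neg, ← hadef, ← hbdef]
    ring
  have hsinhpos : 0 < Real.sinh r * Real.sinh y := by
    rw [hsinh]
    have h1 : 0 < a - a⁻¹ := by
      have : a⁻¹ < 1 := by rw [inv_lt_one_iff₀]; right; exact ha1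
      linarith
    have h2 : 0 < b - b⁻¹ := by
      have : b⁻¹ < 1 := by rw [inv_lt_one_iff₀]; right; exact hb1
      linarith
    positivity
  have hXA : (Real.cosh r * Real.cosh y - Real.cosh R) / (Real.sinh r * Real.sinh y)
      = 1 - 2*A := by
    rw [div_eq_iff (ne_of_gt hsinhpos), hsinh, Real.cosh_eq, Real.cosh_eq, Real.cosh_eq,
      Real.exp_neg, Real.exp_neg, Real.exp_neg, hRe, ← hadef, ← hbdef, hAdef]
    field_simp
    ring
  -- bound |A - t| ≤ 6 t^2
  have hF1 : 1 ≤ a^2*t^2 := by nlinarith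
  have hF2 : 1 ≤ b^2*t^2 := by nlinarith
  have hk1 : t*a^2 ≤ t^3*a^2*b^2 := by nlinarith
  have hk2 : t*b^2 ≤ t^3*a^2*b^2 := by nlinarith
  have hk3 : (5000:ℝ) ≤ t^3*a^2*b^2 := by
    have h5 : 1 ≤ t^4*a^2*b^2 := by nlinarith
    nlinarith [mul_pos (mul_pos (pow_pos ht0 3) (pow_pos ha0 2)) (pow_pos hb0 2)]
  have hk5 : (1-t^2)*a^2 ≤ a^2-1 := by nlinarith
  have hk6 : (1-t^2)*b^2 ≤ b^2-1 := by nlinarith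
  have htsq : t^2 ≤ 1 := by nlinarith
  have hk56 : ((1-t^2)*a^2)*((1-t^2)*b^2) ≤ (a^2-1)*(b^2-1) :=
    mul_le_mul hk5 hk6 (mul_nonneg (by linarith) (sq_nonneg b)) (by nlinarith)
  have hk8 : (5/6:ℝ) ≤ (1-t^2)^2 := by nlinarith
  have hk9 : (5/6:ℝ)*(a^2*b^2) ≤ (1-t^2)^2*(a^2*b^2) :=
    mul_le_mul_of_nonneg_right hk8 (by positivity)
  have hk7 : (5/6:ℝ)*(a^2*b^2) ≤ (a^2-1)*(b^2-1) := by nlinarith [hk56, hk9]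
  have hDpos : 0 < t*(a^2-1)*(b^2-1) := by nlinarith
  have hAt : A - t = ((1-t)*(1 + t - t*(a^2+b^2)))/(t*(a^2-1)*(b^2-1)) := by
    rw [hAdef]
    field_simp
    ring
  have hA6 : |A - t| ≤ 6*t^2 := by
    rw [hAt, abs_div, abs_of_pos hDpos, div_le_iff₀ hDpos, abs_le]
    constructor
    · nlinarith [hk1, hk2, hk3, hk7]
    · nlinarith [hk1, hk2, hk3, hk7]
  -- E = exp(u/2)
  obtain ⟨E, hEdef⟩ : ∃ E : ℝ, E = Real.exp (u/2) := ⟨_, rfl⟩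
  have hE0 : 0 < E := by rw [hEdef]; exact Real.exp_pos _
  have hEt : E^2 = t := by
    rw [hEdef, htdef, ← Real.exp_nat_mul]
    congr 1
    push_cast; ring
  have hexp5 : (100:ℝ) ≤ Real.exp 5 := aux_exp5
  have hE1 : E ≤ 1/100 := by
    have h1 : E ≤ Real.exp (-5) := by
      rw [hEdef]; exact Real.exp_le_exp.mpr (by linarith)
    rw [Real.exp_neg] at h1
    have h2 : (0:ℝ) < Real.exp 5 := Real.exp_pos 5
    have h3 : (Real.exp 5)⁻¹ ≤ 1/100 := by
      rw [inv_le_comm₀ h2 (by norm_num)]; linarith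
    linarith
  have hE4 : E^4 = t^2 := by rw [← hEt]; ring
  have hAup : A ≤ E^2 + 6*E^4 := by
    have h := (abs_le.mp hA6).2; rw [hEt, hE4]; linarith
  have hAlo : E^2 - 6*E^4 ≤ A := by
    have h := (abs_le.mp hA6).1; rw [hEt, hE4]; linarith
  have hA0 : 0 < A := by
    rw [hAdef]
    exact div_pos (mul_pos (aux_pos a t ha1 hat) (aux_pos b t hb1 hbt)) hDpos
  have hX1 : (Real.cosh r * Real.cosh y - Real.cosh R) / (Real.sinh r * Real.sinh y) ≤ 1 := by
    rw [hXA]; linarith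
  have hXm1 : (-1:ℝ) ≤ (Real.cosh r * Real.cosh y - Real.cosh R) / (Real.sinh r * Real.sinh y) := by
    rw [hXA]; linarith [aux_Ale1 E A hE0 hE1 hAup]
  -- upper estimate
  have htppos : (0:ℝ) ≤ 2*E + 100*E^3 := by positivity
  obtain ⟨hcube, htple⟩ := aux_small E hE0 hE1
  have hx3 : 2*E + 100*E^3 ≤ 3*E := by linarith
  have hx4 : (2*E + 100*E^3)^4 ≤ 81*E^4 := by
    calc (2*E + 100*E^3)^4 ≤ (3*E)^4 := pow_le_pow_left₀ htppos hx3 4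
    _ = 81*E^4 := by ring
  have hcosbp := Real.cos_bound (x := 2*E + 100*E^3) (by rw [abs_of_nonneg htppos]; exact htple)
  rw [abs_of_nonneg htppos] at hcosbp
  have hcostp : Real.cos (2*E + 100*E^3) ≤ 1 - 2*A := by
    have h := (abs_le.mp hcosbp).2
    have h2 := aux_polyUp E A hE0 hE1 hAup hx4
    linarith
  have harcle : Real.arccos ((Real.cosh r * Real.cosh y - Real.cosh R) / (Real.sinh r * Real.sinh y))
      ≤ 2*E + 100*E^3 := by
    by_contra hcon
    push_neg at hcon
    have h2 := Real.cos_lt_cos_of_nonneg_of_le_pi htppos (Real.arccos_le_pi _) hcon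
    rw [Real.cos_arccos hXm1 hX1, hXA] at h2
    linarith
  -- lower estimate
  have htmpos : (0:ℝ) ≤ 2*E - 100*E^3 := by linarith
  have htmle : 2*E - 100*E^3 ≤ 1 := by linarith
  have hy4 : (2*E - 100*E^3)^4 ≤ 16*E^4 := by
    calc (2*E - 100*E^3)^4 ≤ (2*E)^4 := pow_le_pow_left₀ htmpos (by linarith [(pow_pos hE0 3).le]) 4
    _ = 16*E^4 := by ring
  have hcosbm := Real.cos_bound (x := 2*E - 100*E^3) (by rw [abs_of_nonneg htmpos]; exact htmle)
  rw [abs_of_nonneg htmpos] at hcosbm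
  have hcostm : 1 - 2*A ≤ Real.cos (2*E - 100*E^3) := by
    have h := (abs_le.mp hcosbm).1
    have h2 := aux_polyLo E A hE0 hE1 hAlo hy4
    linarith
  have harcge : 2*E - 100*E^3
      ≤ Real.arccos ((Real.cosh r * Real.cosh y - Real.cosh R) / (Real.sinh r * Real.sinh y)) := by
    by_contra hcon
    push_neg at hcon
    have hpi : 2*E - 100*E^3 ≤ π := by linarith [Real.pi_gt_three]
    have h2 := Real.cos_lt_cos_of_nonneg_of_le_pi (Real.arccos_nonneg _) hpi hcon
    rw [Real.cos_arccos hXm1 hX1, hXA] at h2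
    linarith
  -- conclude
  have hE3 : Real.exp (3*u/2) = E^3 := by
    rw [hEdef, ← Real.exp_nat_mul]
    congr 1
    push_cast; ring
  have hE3 : Real.exp (3*u/2) = E^3 := by
    rw [hEdef, ← Real.exp_nat_mul]
    congr 1
    push_cast; ring
  rw [← hEdef, hE3, abs_le]
  constructor <;> linarith
end
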